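/- Let L be a Lie algebra over a field of characteristic ≠ 2 satisfying [x,y,[u,v],z]=0, and let m be even with m ≥ 4. Then for left-normalized brackets of total length m and indices i,j > 2, the identity [x_1,x_i,...,x_2,x_j] + [x_1,x_j,...,x_2,x_i] = [x_1,x_2,...,x_i,x_j] + [x_2,x_i,...,x_j,x_1] + [x_1,x_j,...,x_i,x_2] holds, where '...' stands for the same fixed sequence of intermediate variables in each bracket. -/

import Mathlib

/-!
The identity says that `C = [[L, L], [L, L]]` is central. If `P` is a commutator, then
`[P, y, c] = [P, c, y] + [P, [y, c]]` with the last term in `C`, so inside a longer left-normed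
bracket two adjacent letters after a commutator may be swapped freely. Using this, together with
Jacobi at the first two letters, `[a, b, l, c, d]` is rewritten as
`[a, c, l, b, d] - [b, c, l, d, a] + [[a, d], [b, c, l]]`. Swapping the last two letters costs
`[[a, b, l], [c, d]]`, which equals `(-1)^|l| [[a, b], [c, d, l]]` (move the letters of `l` across
one at a time, each move commuting past a central element) and, since the letters of `l` can be
reordered inside `[c, d, l]`, equals `[[a, b], [c, d, l]]` when `|l|` is even. The two correction
terms then cancel in the identity.
-/

/-- Left-normalized Lie bracket: `lnb x [a₁,…,aₙ] = [[…[x,a₁],…],aₙ]`. -/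
def lnb {L : Type*} [LieRing L] (x : L) (l : List L) : L :=
  l.foldl (fun a b => ⁅a, b⁆) x

def IsCentreByMetabelian (L : Type*) [LieRing L] : Prop :=
  ∀ x y u v z : L, ⁅⁅⁅x, y⁆, ⁅u, v⁆⁆, z⁆ = 0

section LieRing

variable {L : Type*} [LieRing L]

lemma lie_lie_eq_lie_lie_add (a b c : L) : ⁅⁅a, b⁆, c⁆ = ⁅⁅a, c⁆, b⁆ + ⁅a, ⁅b, c⁆⁆ := by
  rw [← lie_skew ⁅a, c⁆ b, leibniz_lie a b c]
  abel

lemma lie_lie_eq_neg_of_central {A B : L} (hAB : ∀ t : L, ⁅⁅A, B⁆, t⁆ = 0) (t : L) :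
    ⁅⁅A, t⁆, B⁆ = -⁅A, ⁅B, t⁆⁆ := by
  rw [lie_lie_eq_lie_lie_add, hAB, zero_add, ← lie_skew t B, lie_neg]

@[simp]
lemma lnb_nil (x : L) : lnb x [] = x := rfl

@[simp]
lemma lnb_cons (x a : L) (s : List L) : lnb x (a :: s) = lnb ⁅x, a⁆ s := rfl

lemma lnb_append (x : L) (s t : List L) : lnb x (s ++ t) = lnb (lnb x s) t :=
  List.foldl_append

lemma lnb_append_singleton (x : L) (s : List L) (c : L) :
    lnb x (s ++ [c]) = ⁅lnb x s, c⁆ := by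
  rw [lnb_append]; rfl

lemma lnb_append_pair (x : L) (s : List L) (c d : L) :
    lnb x (s ++ [c, d]) = ⁅⁅lnb x s, c⁆, d⁆ := by
  rw [lnb_append]; rfl

lemma lnb_add (s : List L) (x y : L) : lnb (x + y) s = lnb x s + lnb y s := by
  induction s generalizing x y with
  | nil => rfl
  | cons a s ih => rw [lnb_cons, add_lie, ih]; rfl

lemma lnb_add_of_central {z : L} (hz : ∀ t : L, ⁅z, t⁆ = 0) {s : List L} (hs : s ≠ []) (x : L) :
    lnb (x + z) s = lnb x s := by
  obtain ⟨a, s, rfl⟩ := List.exists_cons_of_ne_nil hs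
  rw [lnb_cons, add_lie, hz, add_zero, lnb_cons]

lemma exists_lnb_lie_eq_lie (b c : L) (s : List L) : ∃ p q : L, lnb ⁅b, c⁆ s = ⁅p, q⁆ := by
  induction s generalizing b c with
  | nil => exact ⟨b, c, rfl⟩
  | cons y s ih => exact ih ⁅b, c⁆ y

end LieRing

namespace IsCentreByMetabelian

variable {L : Type*} [LieRing L] (h : IsCentreByMetabelian L)
include h

lemma lnb_lie_append_pair (s : List L) (a b c d : L) :
    lnb ⁅a, b⁆ (s ++ [c, d]) = lnb ⁅⁅a, b⁆, c⁆ (s ++ [d]) := by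
  induction s generalizing a b with
  | nil => rfl
  | cons y s ih =>
    rw [List.cons_append, List.cons_append, lnb_cons, lnb_cons, ih, lie_lie_eq_lie_lie_add,
      lnb_add_of_central (h a b y c) (by simp)]

lemma lnb_lie_lie_append_singleton (s : List L) (a b c w : L) :
    lnb ⁅a, ⁅b, c⁆⁆ (s ++ [w]) = ⁅⁅a, lnb ⁅b, c⁆ s⁆, w⁆ := by
  induction s generalizing b c with
  | nil => rfl
  | cons y s ih =>
    rw [List.cons_append, lnb_cons, lie_lie_eq_lie_lie_add a, add_comm,
      lnb_add_of_central (h a y b c) (by simp), ih]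
    rfl

lemma lie_lnb_lie_lie (s : List L) (a b c d : L) :
    ⁅lnb ⁅a, b⁆ s, ⁅c, d⁆⁆ = ((-1 : ℤ) ^ s.length) • ⁅⁅a, b⁆, lnb ⁅c, d⁆ s.reverse⁆ := by
  induction s generalizing a b with
  | nil => simp
  | cons t s ih =>
    obtain ⟨p, q, hpq⟩ := exists_lnb_lie_eq_lie c d s.reverse
    have hcentral : ∀ u : L, ⁅⁅⁅a, b⁆, lnb ⁅c, d⁆ s.reverse⁆, u⁆ = 0 := hpq ▸ h a b p q
    rw [lnb_cons, ih, lie_lie_eq_neg_of_central hcentral, List.reverse_cons,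
      lnb_append_singleton, List.length_cons, pow_succ, mul_smul, neg_one_smul]

lemma lie_lnb_lie_perm {s s' : List L} (hs : s.Perm s') (x b c : L) :
    ⁅x, lnb ⁅b, c⁆ s⁆ = ⁅x, lnb ⁅b, c⁆ s'⁆ := by
  induction hs generalizing b c with
  | nil => rfl
  | cons y _ ih => exact ih ⁅b, c⁆ y
  | swap y z t =>
    have hcentral : ∀ u : L, ⁅⁅⁅b, c⁆, ⁅z, y⁆⁆, u⁆ = 0 := h b c z y
    simp only [lnb_cons]
    rw [lie_lie_eq_lie_lie_add ⁅b, c⁆ z y]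
    rcases eq_or_ne t [] with rfl | ht
    · rw [lnb_nil, lnb_nil, lie_add, ← lie_skew x ⁅⁅b, c⁆, ⁅z, y⁆⁆, hcentral, neg_zero, add_zero]
    · rw [lnb_add_of_central hcentral ht]
  | trans _ _ ih₁ ih₂ => exact (ih₁ b c).trans (ih₂ b c)

lemma lie_lnb_lie_lie_of_even {s : List L} (hs : Even s.length) (a b c d : L) :
    ⁅lnb ⁅a, b⁆ s, ⁅c, d⁆⁆ = ⁅⁅a, b⁆, lnb ⁅c, d⁆ s⁆ := by
  rw [h.lie_lnb_lie_lie, hs.neg_one_pow, one_smul]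
  exact h.lie_lnb_lie_perm (List.reverse_perm s) _ c d

lemma lnb_lie_append_pair_swap {s : List L} (hs : Even s.length) (a b c d : L) :
    lnb ⁅a, b⁆ (s ++ [c, d]) = lnb ⁅a, b⁆ (s ++ [d, c]) + ⁅⁅a, b⁆, lnb ⁅c, d⁆ s⁆ := by
  rw [lnb_append_pair, lnb_append_pair, lie_lie_eq_lie_lie_add (lnb ⁅a, b⁆ s) c d,
    h.lie_lnb_lie_lie_of_even hs]

lemma lnb_lie_append_pair_rotate (s : List L) (a b c d : L) :
    lnb ⁅a, b⁆ (s ++ [c, d]) =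
      lnb ⁅a, c⁆ (s ++ [b, d]) + ⁅⁅a, d⁆, lnb ⁅b, c⁆ s⁆ - lnb ⁅b, c⁆ (s ++ [d, a]) := by
  rw [h.lnb_lie_append_pair, h.lnb_lie_append_pair, lie_lie_eq_lie_lie_add a b c, lnb_add,
    h.lnb_lie_lie_append_singleton, lie_lie_eq_lie_lie_add a (lnb ⁅b, c⁆ s) d,
    lnb_append_pair, ← lie_skew a ⁅lnb ⁅b, c⁆ s, d⁆]
  abel

end IsCentreByMetabelian

theorem stmt19_general
    (L : Type) [LieRing L]
    (hcm : ∀ x y u v z : L, ⁅⁅⁅x, y⁆, ⁅u, v⁆⁆, z⁆ = 0)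
    (m : ℕ) (hm : Even m)
    (l : List L) (hl : l.length = m - 4) (x1 x2 xi xj : L) :
    lnb x1 (xi :: l ++ [x2, xj]) + lnb x1 (xj :: l ++ [x2, xi]) =
      lnb x1 (x2 :: l ++ [xi, xj]) + lnb x2 (xi :: l ++ [xj, x1]) +
        lnb x1 (xj :: l ++ [xi, x2]) := by
  have h : IsCentreByMetabelian L := hcm
  have hl_even : Even l.length := hl ▸ hm.tsub (by decide)
  simp only [List.cons_append, lnb_cons]
  rw [h.lnb_lie_append_pair_rotate l x1 x2 xi xj, h.lnb_lie_append_pair_swap hl_even x1 xj x2 xi]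
  abel

/-- In a Lie algebra over a field of characteristic ≠ 2 satisfying
`[x,y,[u,v],z] = 0`, for an even `m ≥ 4` and left-normalized brackets of total
length `m` (so the common intermediate list `l` has `m - 4` entries) one has
`[x₁,xᵢ,…,x₂,xⱼ] + [x₁,xⱼ,…,x₂,xᵢ]
  = [x₁,x₂,…,xᵢ,xⱼ] + [x₂,xᵢ,…,xⱼ,x₁] + [x₁,xⱼ,…,xᵢ,x₂]`. -/
theorem stmt19 (F : Type) [Field F] (hF : ringChar F ≠ 2)
    (L : Type) [LieRing L] [LieAlgebra F L]
    (hcm : ∀ x y u v z : L, ⁅⁅⁅x, y⁆, ⁅u, v⁆⁆, z⁆ = 0)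
    (m : ℕ) (hm : Even m) (hm4 : 4 ≤ m)
    (l : List L) (hl : l.length = m - 4) (x1 x2 xi xj : L) :
    lnb x1 (xi :: l ++ [x2, xj]) + lnb x1 (xj :: l ++ [x2, xi]) =
      lnb x1 (x2 :: l ++ [xi, xj]) + lnb x2 (xi :: l ++ [xj, x1]) +
        lnb x1 (xj :: l ++ [xi, x2]) :=
  stmt19_general L hcm m hm l hl x1 x2 xi xj
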